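/- Let Θ be a finite set, let P_i and P_j be probability mass functions on Θ with ‖P_i − P_j‖_TV ≤ ε_π, and let L_i, L_j : Θ → ℝ satisfy 0 ≤ L_k(θ) ≤ M and |L_i(θ) − L_j(θ)| ≤ ε_ℓ for all θ ∈ Θ and k ∈ {i,j}. Set Z_k = ∑_{θ∈Θ} L_k(θ) P_k(θ) and q_k(θ) = L_k(θ) P_k(θ) / Z_k, and assume Z_i ≥ ζ and Z_j ≥ ζ for some ζ > 0. Then the posteriors satisfy ‖q_i − q_j‖_TV ≤ (2 M ε_π + ε_ℓ) / ζ. -/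

import Mathlib

/-!
Write `a = L_i P_i` and `b = L_j P_j`. Since `a - b = L_i (P_i - P_j) + (L_i - L_j) P_j`, the
unnormalised posteriors are `2 M ε_π + ε_ℓ`-close in `ℓ¹`. Normalising costs at most a factor
two: `a / Z_i - b / Z_j = (a - b) / Z_i + b (Z_j - Z_i) / (Z_i Z_j)`, and `|Z_j - Z_i|` is itself
bounded by `‖a - b‖₁`. Dividing by `Z_i ≥ ζ` finishes the proof.
-/

open Finset

lemma abs_div_sub_div_le {a b Z Z' : ℝ} (hb : 0 ≤ b) (hZ : 0 < Z) (hZ' : 0 < Z') :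
    |a / Z - b / Z'| ≤ |a - b| / Z + b * |Z' - Z| / (Z * Z') := by
  have split : a / Z - b / Z' = (a - b) / Z + b * (Z' - Z) / (Z * Z') := by
    field_simp
    ring
  calc |a / Z - b / Z'| ≤ |(a - b) / Z| + |b * (Z' - Z) / (Z * Z')| :=
        split ▸ abs_add_le _ _
    _ = |a - b| / Z + b * |Z' - Z| / (Z * Z') := by
        rw [abs_div, abs_div, abs_mul, abs_of_nonneg hb, abs_of_pos hZ, abs_of_pos (mul_pos hZ hZ')]

lemma sum_abs_div_sum_sub_div_sum_le {ι : Type*} [Fintype ι] (f g : ι → ℝ)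
    (hg : ∀ i, 0 ≤ g i) (hf : 0 < ∑ i, f i) (hg' : 0 < ∑ i, g i) :
    ∑ i, |f i / ∑ j, f j - g i / ∑ j, g j| ≤ 2 * (∑ i, |f i - g i|) / ∑ i, f i := by
  set Zf := ∑ i, f i
  set Zg := ∑ i, g i with hZg
  have hZ : |Zg - Zf| ≤ ∑ i, |f i - g i| := by
    rw [abs_sub_comm, ← sum_sub_distrib]
    exact abs_sum_le_sum_abs _ _
  calc ∑ i, |f i / Zf - g i / Zg|
      ≤ ∑ i, (|f i - g i| / Zf + g i * |Zg - Zf| / (Zf * Zg)) :=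
        sum_le_sum fun i _ ↦ abs_div_sub_div_le (hg i) hf hg'
    _ = (∑ i, |f i - g i| + |Zg - Zf|) / Zf := by
        rw [sum_add_distrib, ← sum_div, ← sum_div, ← sum_mul, ← hZg]
        field_simp
    _ ≤ 2 * (∑ i, |f i - g i|) / Zf := by gcongr; linarith

lemma sum_abs_mul_sub_mul_le {ι : Type*} [Fintype ι] (L L' P P' : ι → ℝ) {M ε : ℝ}
    (hL0 : ∀ i, 0 ≤ L i) (hLM : ∀ i, L i ≤ M) (hLL' : ∀ i, |L i - L' i| ≤ ε)
    (hP'0 : ∀ i, 0 ≤ P' i) (hP'1 : ∑ i, P' i = 1) :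
    ∑ i, |L i * P i - L' i * P' i| ≤ M * ∑ i, |P i - P' i| + ε := by
  calc ∑ i, |L i * P i - L' i * P' i|
      = ∑ i, |L i * (P i - P' i) + (L i - L' i) * P' i| := by congr! 2; ring
    _ ≤ ∑ i, (M * |P i - P' i| + ε * P' i) := by
        refine sum_le_sum fun i _ ↦ (abs_add_le _ _).trans ?_
        rw [abs_mul, abs_mul, abs_of_nonneg (hL0 i), abs_of_nonneg (hP'0 i)]
        have := hP'0 i
        gcongr
        exacts [hLM i, hLL' i]
    _ = M * ∑ i, |P i - P' i| + ε := by rw [sum_add_distrib, ← mul_sum, ← mul_sum, hP'1, mul_one]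

theorem posterior_tv_bound_general {Θ : Type*} [Fintype Θ]
    (Pi Pj Li Lj : Θ → ℝ) (M επ εℓ ζ : ℝ)
    (hPj0 : ∀ θ, 0 ≤ Pj θ) (hPj1 : ∑ θ, Pj θ = 1)
    (hTV : (1 / 2) * ∑ θ, |Pi θ - Pj θ| ≤ επ)
    (hLi0 : ∀ θ, 0 ≤ Li θ) (hLiM : ∀ θ, Li θ ≤ M)
    (hLj0 : ∀ θ, 0 ≤ Lj θ)
    (hL : ∀ θ, |Li θ - Lj θ| ≤ εℓ)
    (hζ : 0 < ζ)
    (hZi : ζ ≤ ∑ θ, Li θ * Pi θ)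
    (hZj : ζ ≤ ∑ θ, Lj θ * Pj θ) :
    (1 / 2) * ∑ θ, |Li θ * Pi θ / (∑ θ', Li θ' * Pi θ') -
        Lj θ * Pj θ / (∑ θ', Lj θ' * Pj θ')| ≤ (2 * M * επ + εℓ) / ζ := by
  have hZi0 : 0 < ∑ θ, Li θ * Pi θ := hζ.trans_le hZi
  obtain ⟨θ₀, -, -⟩ := exists_ne_zero_of_sum_ne_zero hZi0.ne'
  have hM : 0 ≤ M := (hLi0 θ₀).trans (hLiM θ₀)
  have hA : ∑ θ, |Li θ * Pi θ - Lj θ * Pj θ| ≤ 2 * M * επ + εℓ :=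
    (sum_abs_mul_sub_mul_le Li Lj Pi Pj hLi0 hLiM hL hPj0 hPj1).trans (by nlinarith)
  have hA0 : 0 ≤ 2 * M * επ + εℓ := (sum_nonneg fun θ _ ↦ abs_nonneg _).trans hA
  calc (1 / 2) * ∑ θ, |Li θ * Pi θ / (∑ θ', Li θ' * Pi θ') -
        Lj θ * Pj θ / (∑ θ', Lj θ' * Pj θ')|
      ≤ (1 / 2) * (2 * (∑ θ, |Li θ * Pi θ - Lj θ * Pj θ|) / ∑ θ, Li θ * Pi θ) := by
        gcongr
        exact sum_abs_div_sum_sub_div_sum_le (fun θ ↦ Li θ * Pi θ) (fun θ ↦ Lj θ * Pj θ)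
          (fun θ ↦ mul_nonneg (hLj0 θ) (hPj0 θ)) hZi0 (hζ.trans_le hZj)
    _ = (∑ θ, |Li θ * Pi θ - Lj θ * Pj θ|) / ∑ θ, Li θ * Pi θ := by ring
    _ ≤ (2 * M * επ + εℓ) / ζ := div_le_div₀ hA0 hA hζ hZi

/-- **ε-Stability of Role Posteriors.** If the priors are ε_π-close in total
variation, the likelihoods are bounded by `M` and pointwise ε_ℓ-close, and both
evidences are lower-bounded by `ζ > 0`, then the normalized posteriors are
`(2 M ε_π + ε_ℓ) / ζ`-close in total variation. -/
theorem posterior_tv_bound {Θ : Type*} [Fintype Θ]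
    (Pi Pj Li Lj : Θ → ℝ) (M επ εℓ ζ : ℝ)
    (hPi0 : ∀ θ, 0 ≤ Pi θ) (hPi1 : ∑ θ, Pi θ = 1)
    (hPj0 : ∀ θ, 0 ≤ Pj θ) (hPj1 : ∑ θ, Pj θ = 1)
    (hTV : (1 / 2) * ∑ θ, |Pi θ - Pj θ| ≤ επ)
    (hLi0 : ∀ θ, 0 ≤ Li θ) (hLiM : ∀ θ, Li θ ≤ M)
    (hLj0 : ∀ θ, 0 ≤ Lj θ) (hLjM : ∀ θ, Lj θ ≤ M)
    (hL : ∀ θ, |Li θ - Lj θ| ≤ εℓ)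
    (hζ : 0 < ζ)
    (hZi : ζ ≤ ∑ θ, Li θ * Pi θ)
    (hZj : ζ ≤ ∑ θ, Lj θ * Pj θ) :
    (1 / 2) * ∑ θ, |Li θ * Pi θ / (∑ θ', Li θ' * Pi θ') -
        Lj θ * Pj θ / (∑ θ', Lj θ' * Pj θ')| ≤ (2 * M * επ + εℓ) / ζ :=
  posterior_tv_bound_general Pi Pj Li Lj M επ εℓ ζ hPj0 hPj1 hTV hLi0 hLiM hLj0 hL hζ hZi hZj
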